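/- Let Δ ⊂ Σ ⊂ ℙⁿ be finite sets over a field and D, e natural numbers. Suppose: (i) there is a homogeneous form H of degree e vanishing at every point of Δ and at no point of Σ ∖ Δ; (ii) Δ imposes independent conditions on forms of degree D; (iii) Σ ∖ Δ imposes independent conditions on forms of degree D − e (with e ≤ D). Then for every point P ∈ Σ there exists a homogeneous form of degree D vanishing on Σ ∖ {P} and not vanishing at P. Contrapositive: if Σ imposes dependent conditions on degree-D forms and (i), (ii) hold, then Σ ∖ Δ imposes dependent conditions on degree D − e forms. -/
import Mathlib


open MvPolynomial

noncomputable section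

variable (K : Type) [Field K]

/-- Projective n-space over the field K. -/
abbrev PtK (K : Type) [Field K] (n : ℕ) := Projectivization K (Fin (n+1) → K)

/-- A homogeneous form vanishes at a point of projective space. -/
def VanishesAtK {K : Type} [Field K] {n : ℕ} (F : MvPolynomial (Fin (n+1)) K)
    (p : PtK K n) : Prop :=
  ∀ (v : Fin (n+1) → K) (hv : v ≠ 0), p = Projectivization.mk K v hv → eval v F = 0

/-- A finite set imposes independent linear conditions on forms of degree `D`:
for each point `P` there is a degree-`D` form vanishing on the rest of the set
but not at `P`. -/
def ImposesIndependentConditionsK {K : Type} [Field K] {n : ℕ}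
    (S : Finset (PtK K n)) (D : ℕ) : Prop :=
  ∀ P ∈ S, ∃ F : MvPolynomial (Fin (n+1)) K, F.IsHomogeneous D ∧
    (∀ Q ∈ S, Q ≠ P → VanishesAtK F Q) ∧ ¬ VanishesAtK F P


/-- Evaluation of a homogeneous form scales by `c ^ d` under scalar rescaling. -/
lemma eval_smul_of_isHomogeneous {K : Type} [Field K] {n d : ℕ}
    {F : MvPolynomial (Fin (n+1)) K}
    (hF : F.IsHomogeneous d) (c : K) (v : Fin (n+1) → K) :
    eval (c • v) F = c ^ d * eval v F := by
  rw [eval_eq', eval_eq', Finset.mul_sum]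
  refine Finset.sum_congr rfl fun m hm => ?_
  have hdeg : m.degree = d := by
    by_contra h
    exact mem_support_iff.mp hm (hF.coeff_eq_zero h)
  have h1 : ∑ i, m i = d := by
    rw [← hdeg, Finsupp.degree]
    exact (Finset.sum_subset (Finset.subset_univ _)
      (fun i _ hi => Finsupp.notMem_support_iff.mp hi)).symm
  calc coeff m F * ∏ i, (c • v) i ^ m i
      = coeff m F * ∏ i, (c ^ m i * v i ^ m i) := by
        simp [Pi.smul_apply, smul_eq_mul, mul_pow]
    _ = c ^ d * (coeff m F * ∏ i, v i ^ m i) := by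
        rw [Finset.prod_mul_distrib, Finset.prod_pow_eq_pow_sum, h1]; ring

/-- For a homogeneous form, vanishing at a point is equivalent to vanishing at its
canonical representative. -/
lemma vanishesAtK_iff {K : Type} [Field K] {n d : ℕ}
    {F : MvPolynomial (Fin (n+1)) K} (hF : F.IsHomogeneous d) (P : PtK K n) :
    VanishesAtK F P ↔ eval P.rep F = 0 := by
  constructor
  · intro h
    exact h P.rep P.rep_nonzero P.mk_rep.symm
  · intro h v hv hPv
    have hmk : Projectivization.mk K P.rep P.rep_nonzero = Projectivization.mk K v hv := by
      rw [P.mk_rep]; exact hPv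
    obtain ⟨a, ha⟩ := (Projectivization.mk_eq_mk_iff K _ _ _ _).mp hmk
    have ha' : (a : K) • v = P.rep := ha
    have := eval_smul_of_isHomogeneous hF (a : K) v
    rw [ha', h] at this
    have ha0 : (a : K) ^ d ≠ 0 := pow_ne_zero _ a.ne_zero
    exact (mul_eq_zero.mp this.symm).resolve_left ha0

/-- Abstract swapping lemma: Δ ⊂ Σ, a degree-e form H vanishes exactly on Δ inside Σ,
Δ imposes independent conditions in degree D and Σ \ Δ in degree D - e; then Σ imposes
independent conditions in degree D. -/
theorem abstract_swapping_lemma {K : Type} [Field K] (n D e : ℕ) [DecidableEq (PtK K n)] (he : e ≤ D)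
    (S₀ Δ : Finset (PtK K n)) (hsub : Δ ⊆ S₀)
    (H : MvPolynomial (Fin (n+1)) K) (hH : H.IsHomogeneous e)
    (hHΔ : ∀ P ∈ Δ, VanishesAtK H P) (hHΓ : ∀ P ∈ S₀ \ Δ, ¬ VanishesAtK H P)
    (hΔ : ImposesIndependentConditionsK Δ D)
    (hΓ : ImposesIndependentConditionsK (S₀ \ Δ) (D - e)) :
    ImposesIndependentConditionsK S₀ D := by
  classical
  set Γ : Finset (PtK K n) := S₀ \ Δ with hΓdef
  choose! g hg1 hg2 hg3 using hΓ
  -- evaluate H at reps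
  have hHrep0 : ∀ P ∈ Δ, eval P.rep H = 0 := fun P hP =>
    (vanishesAtK_iff hH P).mp (hHΔ P hP)
  have hHrepne : ∀ P ∈ Γ, eval P.rep H ≠ 0 := fun P hP h =>
    hHΓ P hP ((vanishesAtK_iff hH P).mpr h)
  have hgrepne : ∀ P ∈ Γ, eval P.rep (g P) ≠ 0 := fun P hP h =>
    hg3 P hP ((vanishesAtK_iff (hg1 P hP) P).mpr h)
  have hgrep0 : ∀ P ∈ Γ, ∀ Q ∈ Γ, Q ≠ P → eval Q.rep (g P) = 0 := fun P hP Q hQ hne =>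
    (vanishesAtK_iff (hg1 P hP) Q).mp (hg2 P hP Q hQ hne)
  have hDe : e + (D - e) = D := Nat.add_sub_cancel' he
  intro P hP
  by_cases hPΔ : P ∈ Δ
  · -- P ∈ Δ : correct the separating form for Δ
    obtain ⟨F, hFhom, hFvan, hFP⟩ := hΔ P hPΔ
    have hFrepP : eval P.rep F ≠ 0 := fun h => hFP ((vanishesAtK_iff hFhom P).mpr h)
    set F' : MvPolynomial (Fin (n+1)) K :=
      F - ∑ Q ∈ Γ.attach, C (eval Q.1.rep F / eval Q.1.rep (H * g Q.1)) * (H * g Q.1) with hF'def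
    have hterm : ∀ Q : {x // x ∈ Γ},
        (C (eval Q.1.rep F / eval Q.1.rep (H * g Q.1)) * (H * g Q.1)).IsHomogeneous D := by
      intro Q
      have h1 : (H * g Q.1).IsHomogeneous D := by
        have := hH.mul (hg1 Q.1 Q.2); rwa [hDe] at this
      have := (isHomogeneous_C (Fin (n+1))
        (eval Q.1.rep F / eval Q.1.rep (H * g Q.1))).mul h1
      rwa [zero_add] at this
    have hF'hom : F'.IsHomogeneous D :=
      hFhom.sub (IsHomogeneous.sum _ _ _ fun Q _ => hterm Q)
    have hevalF' : ∀ R : PtK K n, eval R.rep F' = eval R.rep F -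
        ∑ Q ∈ Γ.attach, eval Q.1.rep F / eval Q.1.rep (H * g Q.1) *
          (eval R.rep H * eval R.rep (g Q.1)) := by
      intro R
      simp [hF'def, map_sum]
    refine ⟨F', hF'hom, ?_, ?_⟩
    · intro Q hQ hQP
      rw [vanishesAtK_iff hF'hom, hevalF']
      by_cases hQΔ : Q ∈ Δ
      · rw [(vanishesAtK_iff hFhom Q).mp (hFvan Q hQΔ hQP)]
        rw [Finset.sum_eq_zero, sub_zero]
        intro R _
        rw [hHrep0 Q hQΔ]; ring
      · have hQΓ : Q ∈ Γ := Finset.mem_sdiff.mpr ⟨hQ, hQΔ⟩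
        rw [Finset.sum_eq_single (⟨Q, hQΓ⟩ : {x // x ∈ Γ})]
        · rw [eval_mul, div_mul_cancel₀, sub_self]
          exact mul_ne_zero (hHrepne Q hQΓ) (hgrepne Q hQΓ)
        · intro R _ hR
          have hRQ : Q ≠ R.1 := fun h => hR (Subtype.ext h.symm)
          rw [hgrep0 R.1 R.2 Q hQΓ hRQ]; ring
        · intro h; exact absurd (Finset.mem_attach _ _) h
    · intro hvan
      have := (vanishesAtK_iff hF'hom P).mp hvan
      rw [hevalF'] at this
      rw [Finset.sum_eq_zero, sub_zero] at this
      · exact hFrepP this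
      · intro R _
        rw [hHrep0 P hPΔ]; ring
  · -- P ∈ Γ : use H * g P
    have hPΓ : P ∈ Γ := Finset.mem_sdiff.mpr ⟨hP, hPΔ⟩
    have hhom : (H * g P).IsHomogeneous D := by
      have := hH.mul (hg1 P hPΓ); rwa [hDe] at this
    refine ⟨H * g P, hhom, ?_, ?_⟩
    · intro Q hQ hQP
      rw [vanishesAtK_iff hhom, eval_mul]
      by_cases hQΔ : Q ∈ Δ
      · rw [hHrep0 Q hQΔ, zero_mul]
      · rw [hgrep0 P hPΓ Q (Finset.mem_sdiff.mpr ⟨hQ, hQΔ⟩) hQP, mul_zero]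
    · intro hvan
      have := (vanishesAtK_iff hhom P).mp hvan
      rw [eval_mul] at this
      exact mul_ne_zero (hHrepne P hPΓ) (hgrepne P hPΓ) this
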